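/- (Three-party qubit Werner state joinability) Three qubit Werner states with parameters (η_AB, η_AC, η_BC) admit a joint three-qubit state w ≥ 0, invariant under U⊗U⊗U and with reduced states Tr_C(w), Tr_B(w), Tr_A(w) equal to the Werner states ρ(η_AB), ρ(η_AC), ρ(η_BC) respectively, if and only if (1/2)(1 − η_AB − η_AC − η_BC) ≥ |η_AB + ω η_AC + ω² η_BC| with ω = e^{2πi/3}, and η_AB + η_AC + η_BC ≥ −1. -/

import Mathlib

open Matrix Kronecker BigOperators
open scoped ComplexOrder

/-- The swap operator on `C² ⊗ C²`. -/
noncomputable def swapOp2 : Matrix (Fin 2 × Fin 2) (Fin 2 × Fin 2) ℂ :=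
  fun p q => if p.1 = q.2 ∧ p.2 = q.1 then 1 else 0

/-- Qubit Werner state `ρ(η) = (1−η) I/4 + η V/2`. -/
noncomputable def werner2 (η : ℝ) : Matrix (Fin 2 × Fin 2) (Fin 2 × Fin 2) ℂ :=
  ((1 - η) / 4) • (1 : Matrix (Fin 2 × Fin 2) (Fin 2 × Fin 2) ℂ) + (η / 2) • swapOp2

abbrev Tri := Fin 2 × Fin 2 × Fin 2

/-- Partial trace over the third qubit. -/
noncomputable def trC (w : Matrix Tri Tri ℂ) : Matrix (Fin 2 × Fin 2) (Fin 2 × Fin 2) ℂ :=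
  fun p q => ∑ m : Fin 2, w (p.1, p.2, m) (q.1, q.2, m)

/-- Partial trace over the second qubit. -/
noncomputable def trB (w : Matrix Tri Tri ℂ) : Matrix (Fin 2 × Fin 2) (Fin 2 × Fin 2) ℂ :=
  fun p q => ∑ m : Fin 2, w (p.1, m, p.2) (q.1, m, q.2)

/-- Partial trace over the first qubit. -/
noncomputable def trA (w : Matrix Tri Tri ℂ) : Matrix (Fin 2 × Fin 2) (Fin 2 × Fin 2) ℂ :=
  fun p q => ∑ m : Fin 2, w (m, p.1, p.2) (m, q.1, q.2)

/-- `U ⊗ U ⊗ U` for a single-qubit unitary `U`. -/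
noncomputable def triple (U : Matrix (Fin 2) (Fin 2) ℂ) : Matrix Tri Tri ℂ :=
  U ⊗ₖ (U ⊗ₖ U)

/-!
Operators commuting with every `U ⊗ U ⊗ U` are combinations of the permutations of the three
qubits. On `(ℂ²)^⊗3` the antisymmetrizer of `S₃` vanishes, so the real combination
`α + γ₁ (12) + γ₂ (13) + γ₃ (23)` acts by `α + γ₁ + γ₂ + γ₃` on the symmetric subspace and with
eigenvalues `α ± |γ₁ + ω γ₂ + ω² γ₃|` on the two-dimensional part. The joint state is the
combination with `α = (1 - ηAB - ηAC - ηBC) / 8`, `γ = η / 4`, whose marginals are the Werner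
states. Conversely, the trace of a joint state against a combination of transpositions depends
only on its two-qubit marginals, and testing against the positive combinations that detect the
two eigenvalue conditions gives the inequalities.
-/

open Equiv

section PosSemidef

variable {n 𝕜 : Type*} [Fintype n] [RCLike 𝕜]

theorem Matrix.PosSemidef.of_mul_self_add_eq_smul {A B : Matrix n n 𝕜} (hA : A.IsHermitian)
    (hB : B.PosSemidef) {t : ℝ} (ht : 0 < t) (h : A * A + B = t • A) : A.PosSemidef := by
  have hA' : A = t⁻¹ • (Aᴴ * A + B) := by
    rw [hA.eq, h, smul_smul, inv_mul_cancel₀ ht.ne', one_smul]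
  rw [hA']
  exact ((posSemidef_conjTranspose_mul_self A).add hB).smul (inv_nonneg.2 ht.le)

open scoped MatrixOrder Matrix.Norms.L2Operator in
theorem Matrix.PosSemidef.trace_mul_nonneg {A B : Matrix n n 𝕜} (hA : A.PosSemidef)
    (hB : B.PosSemidef) : 0 ≤ (A * B).trace := by
  classical
  obtain ⟨C, rfl⟩ := CStarAlgebra.nonneg_iff_eq_star_mul_self.mp hB.nonneg
  rw [← Matrix.mul_assoc, Matrix.trace_mul_comm, ← Matrix.mul_assoc]
  exact (hA.mul_mul_conjTranspose_same C).trace_nonneg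

end PosSemidef

theorem Matrix.commute_permMatrix_of_submatrix_eq {n R : Type*} [Fintype n] [DecidableEq n]
    [NonAssocSemiring R] {M : Matrix n n R} {σ : Perm n} (h : M.submatrix σ σ = M) :
    Commute (σ.permMatrix R) M := by
  refine (PEquiv.toMatrix_toPEquiv_mul σ M).trans ?_ |>.trans
    (PEquiv.mul_toMatrix_toPEquiv M σ).symm
  ext i j
  simpa using congrFun (congrFun h i) (σ.symm j)

namespace ThreeQubit

def swap₁₂ : Perm Tri where
  toFun p := (p.2.1, p.1, p.2.2)
  invFun p := (p.2.1, p.1, p.2.2)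
  left_inv _ := rfl
  right_inv _ := rfl

def swap₁₃ : Perm Tri where
  toFun p := (p.2.2, p.2.1, p.1)
  invFun p := (p.2.2, p.2.1, p.1)
  left_inv _ := rfl
  right_inv _ := rfl

def swap₂₃ : Perm Tri where
  toFun p := (p.1, p.2.2, p.2.1)
  invFun p := (p.1, p.2.2, p.2.1)
  left_inv _ := rfl
  right_inv _ := rfl

local notation "P₁₂" => swap₁₂.permMatrix ℂ
local notation "P₁₃" => swap₁₃.permMatrix ℂ
local notation "P₂₃" => swap₂₃.permMatrix ℂ

-- There is no alternating 3-tensor on `ℂ²`, so the antisymmetrizer of `S₃` acts as zero.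
lemma cycles_add_eq_swaps_sub_one : P₁₂ * P₁₃ + P₁₃ * P₁₂ = P₁₂ + P₁₃ + P₂₃ - 1 := by
  rw [← Matrix.permMatrix_mul, ← Matrix.permMatrix_mul]
  ext ⟨a, b, c⟩ ⟨d, e, f⟩
  fin_cases a <;> fin_cases b <;> fin_cases c <;> fin_cases d <;> fin_cases e <;> fin_cases f <;>
    simp [-Matrix.permMatrix_mul, swap₁₂, swap₁₃, swap₂₃, PEquiv.toMatrix_apply,
      Perm.mul_apply]

noncomputable def swapComb (α γ₁ γ₂ γ₃ : ℝ) : Matrix Tri Tri ℂ :=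
  α • 1 + γ₁ • P₁₂ + γ₂ • P₁₃ + γ₃ • P₂₃

lemma swapComb_mul_self (α γ₁ γ₂ γ₃ : ℝ) :
    swapComb α γ₁ γ₂ γ₃ * swapComb α γ₁ γ₂ γ₃ =
      swapComb (α ^ 2 + γ₁ ^ 2 + γ₂ ^ 2 + γ₃ ^ 2 - (γ₁ * γ₂ + γ₁ * γ₃ + γ₂ * γ₃))
        (2 * α * γ₁ + (γ₁ * γ₂ + γ₁ * γ₃ + γ₂ * γ₃))
        (2 * α * γ₂ + (γ₁ * γ₂ + γ₁ * γ₃ + γ₂ * γ₃))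
        (2 * α * γ₃ + (γ₁ * γ₂ + γ₁ * γ₃ + γ₂ * γ₃)) := by
  obtain ⟨h₁₂, h₁₃, h₂₃, hc₁, hc₂, hc₃, hc₄⟩ : swap₁₂ * swap₁₂ = 1 ∧ swap₁₃ * swap₁₃ = 1 ∧
      swap₂₃ * swap₂₃ = 1 ∧ swap₂₃ * swap₁₃ = swap₁₃ * swap₁₂ ∧
      swap₁₂ * swap₂₃ = swap₁₃ * swap₁₂ ∧ swap₂₃ * swap₁₂ = swap₁₂ * swap₁₃ ∧
      swap₁₃ * swap₂₃ = swap₁₂ * swap₁₃ :=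
    ⟨rfl, rfl, rfl, rfl, rfl, rfl, rfl⟩
  have hcycles := cycles_add_eq_swaps_sub_one
  simp only [swapComb, add_mul, mul_add, smul_mul_smul_comm, one_mul, mul_one,
    ← Matrix.permMatrix_mul, h₁₂, h₁₃, h₂₃, hc₁, hc₂, hc₃, hc₄, Matrix.permMatrix_one] at hcycles ⊢
  linear_combination (norm := module) (γ₁ * γ₂ + γ₁ * γ₃ + γ₂ * γ₃) • hcycles

lemma isHermitian_swapComb (α γ₁ γ₂ γ₃ : ℝ) : (swapComb α γ₁ γ₂ γ₃).IsHermitian := by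
  have h₁₂ : swap₁₂⁻¹ = swap₁₂ := rfl
  have h₁₃ : swap₁₃⁻¹ = swap₁₃ := rfl
  have h₂₃ : swap₂₃⁻¹ = swap₂₃ := rfl
  simp [swapComb, Matrix.IsHermitian, h₁₂, h₁₃, h₂₃]

theorem posSemidef_swapComb {α γ₁ γ₂ γ₃ : ℝ} (hα : 0 ≤ α) (hsym : 0 ≤ α + γ₁ + γ₂ + γ₃)
    (hstd : γ₁ ^ 2 + γ₂ ^ 2 + γ₃ ^ 2 - (γ₁ * γ₂ + γ₁ * γ₃ + γ₂ * γ₃) ≤ α ^ 2) :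
    (swapComb α γ₁ γ₂ γ₃).PosSemidef := by
  set m := (γ₁ + γ₂ + γ₃) / 3
  have hsplit : swapComb α γ₁ γ₂ γ₃ = ((α + γ₁ + γ₂ + γ₃) / 3) • swapComb 0 1 1 1 +
      swapComb α (γ₁ - m - α / 3) (γ₂ - m - α / 3) (γ₃ - m - α / 3) := by
    simp only [swapComb, m]
    module
  have hS : (swapComb 0 1 1 1).PosSemidef := by
    refine .of_mul_self_add_eq_smul (isHermitian_swapComb ..) .zero (t := 3) (by norm_num) ?_
    rw [swapComb_mul_self, add_zero]
    simp only [swapComb]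
    module
  -- The transposition coefficients of `G` below sum to `-α`, so `G` vanishes on the symmetric
  -- subspace; with `Q` the projection onto its complement and `N = ‖γ₁ + ω γ₂ + ω² γ₃‖²`,
  -- `G² + (α² - N) Q = 2α G`, which gives positivity without diagonalizing.
  have hG : (swapComb α (γ₁ - m - α / 3) (γ₂ - m - α / 3) (γ₃ - m - α / 3)).PosSemidef := by
    rcases hα.eq_or_lt with rfl | hα
    · obtain ⟨h₂, h₃⟩ : γ₂ = γ₁ ∧ γ₃ = γ₁ := by
        constructor <;> nlinarith [sq_nonneg (γ₁ - γ₂), sq_nonneg (γ₁ - γ₃), sq_nonneg (γ₂ - γ₃)]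
      have hδ : γ₁ - m - 0 / 3 = 0 := by simp only [m, h₂, h₃]; ring
      rw [h₂, h₃, hδ]
      simpa [swapComb] using PosSemidef.zero
    · have hQ : (swapComb 1 (-1/3) (-1/3) (-1/3)).PosSemidef := by
        refine .of_mul_self_add_eq_smul (isHermitian_swapComb ..) .zero (t := 1) one_pos ?_
        rw [swapComb_mul_self, add_zero]
        simp only [swapComb]
        module
      refine .of_mul_self_add_eq_smul (isHermitian_swapComb ..) (hQ.smul (sub_nonneg.2 hstd))
        (t := 2 * α) (by positivity) ?_
      rw [swapComb_mul_self]
      simp only [swapComb, m]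
      module
  rw [hsplit]
  exact (hS.smul (by linarith)).add hG

lemma trace_mul_swap₁₂ (w : Matrix Tri Tri ℂ) : (w * P₁₂).trace = (trC w * swapOp2).trace := by
  simp [PEquiv.mul_toMatrix_toPEquiv, Matrix.trace, Matrix.mul_apply, trC, swapOp2,
    Fintype.sum_prod_type, Fin.sum_univ_two, swap₁₂]

lemma trace_mul_swap₁₃ (w : Matrix Tri Tri ℂ) : (w * P₁₃).trace = (trB w * swapOp2).trace := by
  simp only [trace, swap₁₃, PEquiv.mul_toMatrix_toPEquiv, symm_mk, coe_fn_mk, diag_apply,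
    submatrix_apply, id_eq, Fintype.sum_prod_type, Fin.sum_univ_two, Fin.isValue, Matrix.mul_apply,
    trB, swapOp2, mul_ite, mul_one, mul_zero, true_and, one_ne_zero, false_and, ↓reduceIte,
    add_zero, zero_ne_one, zero_add]
  ring

lemma trace_mul_swap₂₃ (w : Matrix Tri Tri ℂ) : (w * P₂₃).trace = (trA w * swapOp2).trace := by
  simp only [trace, swap₂₃, PEquiv.mul_toMatrix_toPEquiv, symm_mk, coe_fn_mk, diag_apply,
    submatrix_apply, id_eq, Fintype.sum_prod_type, Fin.sum_univ_two, Fin.isValue, Matrix.mul_apply,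
    trA, Prod.mk.eta, swapOp2, mul_ite, mul_one, mul_zero, true_and, one_ne_zero, false_and,
    ↓reduceIte, add_zero, zero_ne_one, zero_add]
  ring

lemma trace_werner2_mul_swapOp2 (η : ℝ) :
    (werner2 η * swapOp2).trace = ((1 + 3 * η) / 2 : ℝ) := by
  simp only [trace, werner2, diag_apply, Matrix.mul_apply, Matrix.add_apply, Matrix.smul_apply,
    Matrix.one_apply, smul_ite, Complex.real_smul, mul_one, smul_zero, swapOp2, mul_ite, mul_zero,
    Fintype.sum_prod_type, Fin.sum_univ_two, Fin.isValue, Prod.mk.injEq, true_and, and_true,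
    zero_ne_one, and_false, ↓reduceIte, zero_add, one_ne_zero, false_and, add_zero]
  push_cast
  ring

lemma trace_mul_swapComb_of_marginals {w : Matrix Tri Tri ℂ} {η₁ η₂ η₃ : ℝ}
    (htr : w.trace = 1) (hC : trC w = werner2 η₁) (hB : trB w = werner2 η₂)
    (hA : trA w = werner2 η₃) (α γ₁ γ₂ γ₃ : ℝ) :
    (w * swapComb α γ₁ γ₂ γ₃).trace =
      ((α + (γ₁ * (1 + 3 * η₁) + γ₂ * (1 + 3 * η₂) + γ₃ * (1 + 3 * η₃)) / 2 : ℝ) : ℂ) := by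
  simp only [swapComb, Matrix.mul_add, Matrix.mul_smul, Matrix.mul_one, Matrix.trace_add,
    Matrix.trace_smul, htr, trace_mul_swap₁₂, trace_mul_swap₁₃, trace_mul_swap₂₃, hC, hB, hA,
    trace_werner2_mul_swapOp2, Complex.real_smul]
  push_cast
  ring

lemma trace_swapComb (α γ₁ γ₂ γ₃ : ℝ) :
    (swapComb α γ₁ γ₂ γ₃).trace = ((8 * α + 4 * (γ₁ + γ₂ + γ₃) : ℝ) : ℂ) := by
  simp only [trace, swapComb, swap₁₂, swap₁₃, swap₂₃, diag_apply, Matrix.add_apply,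
    Matrix.smul_apply, one_apply_eq, Complex.real_smul, mul_one, PEquiv.toMatrix_apply,
    toPEquiv_apply, coe_fn_mk, Option.mem_def, Option.some.injEq, smul_ite, smul_zero,
    Fintype.sum_prod_type, Prod.mk.injEq, true_and, and_true, Fin.sum_univ_two, Fin.isValue,
    and_self, ↓reduceIte, one_ne_zero, zero_ne_one, add_zero]
  push_cast
  ring

lemma trC_swapComb (α γ₁ γ₂ γ₃ : ℝ) :
    trC (swapComb α γ₁ γ₂ γ₃) = (2 * α + γ₂ + γ₃) • 1 + (2 * γ₁) • swapOp2 := by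
  ext ⟨a, b⟩ ⟨d, e⟩
  fin_cases a <;> fin_cases b <;> fin_cases d <;> fin_cases e <;>
    simp [trC, swapComb, swapOp2, PEquiv.toMatrix_apply, Fin.sum_univ_two,
      swap₁₂, swap₁₃, swap₂₃] <;> ring

lemma trB_swapComb (α γ₁ γ₂ γ₃ : ℝ) :
    trB (swapComb α γ₁ γ₂ γ₃) = (2 * α + γ₁ + γ₃) • 1 + (2 * γ₂) • swapOp2 := by
  ext ⟨a, b⟩ ⟨d, e⟩
  fin_cases a <;> fin_cases b <;> fin_cases d <;> fin_cases e <;>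
    simp [trB, swapComb, swapOp2, PEquiv.toMatrix_apply, Fin.sum_univ_two,
      swap₁₂, swap₁₃, swap₂₃] <;> ring

lemma trA_swapComb (α γ₁ γ₂ γ₃ : ℝ) :
    trA (swapComb α γ₁ γ₂ γ₃) = (2 * α + γ₁ + γ₂) • 1 + (2 * γ₃) • swapOp2 := by
  ext ⟨a, b⟩ ⟨d, e⟩
  fin_cases a <;> fin_cases b <;> fin_cases d <;> fin_cases e <;>
    simp [trA, swapComb, swapOp2, PEquiv.toMatrix_apply, Fin.sum_univ_two,
      swap₁₂, swap₁₃, swap₂₃] <;> ring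

lemma commute_triple_swapComb (U : Matrix (Fin 2) (Fin 2) ℂ) (α γ₁ γ₂ γ₃ : ℝ) :
    Commute (triple U) (swapComb α γ₁ γ₂ γ₃) := by
  have h₁₂ : Commute (triple U) P₁₂ := .symm <| Matrix.commute_permMatrix_of_submatrix_eq <| by
    ext ⟨a, b, c⟩ ⟨d, e, f⟩
    simp only [triple, swap₁₂, Matrix.submatrix_apply, Equiv.coe_fn_mk, Matrix.kroneckerMap_apply]
    ring
  have h₁₃ : Commute (triple U) P₁₃ := .symm <| Matrix.commute_permMatrix_of_submatrix_eq <| by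
    ext ⟨a, b, c⟩ ⟨d, e, f⟩
    simp only [triple, swap₁₃, Matrix.submatrix_apply, Equiv.coe_fn_mk, Matrix.kroneckerMap_apply]
    ring
  have h₂₃ : Commute (triple U) P₂₃ := .symm <| Matrix.commute_permMatrix_of_submatrix_eq <| by
    ext ⟨a, b, c⟩ ⟨d, e, f⟩
    simp only [triple, swap₂₃, Matrix.submatrix_apply, Equiv.coe_fn_mk, Matrix.kroneckerMap_apply]
    ring
  unfold swapComb
  apply_rules [Commute.add_right, Commute.smul_right, Commute.one_right]

theorem neg_one_le_sum_of_werner_marginals {w : Matrix Tri Tri ℂ} {η₁ η₂ η₃ : ℝ}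
    (hw : w.PosSemidef) (htr : w.trace = 1) (hC : trC w = werner2 η₁)
    (hB : trB w = werner2 η₂) (hA : trA w = werner2 η₃) : -1 ≤ η₁ + η₂ + η₃ := by
  have h := hw.trace_mul_nonneg (posSemidef_swapComb le_rfl (by norm_num) (by norm_num) :
    (swapComb 0 1 1 1).PosSemidef)
  rw [trace_mul_swapComb_of_marginals htr hC hB hA, Complex.zero_le_real] at h
  linarith

theorem le_half_one_sub_of_werner_marginals {w : Matrix Tri Tri ℂ} {η₁ η₂ η₃ : ℝ}
    (hw : w.PosSemidef) (htr : w.trace = 1) (hC : trC w = werner2 η₁)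
    (hB : trB w = werner2 η₂) (hA : trA w = werner2 η₃) {t : ℝ}
    (ht : t ^ 2 = η₁ ^ 2 + η₂ ^ 2 + η₃ ^ 2 - (η₁ * η₂ + η₁ * η₃ + η₂ * η₃)) :
    t ≤ (1 - η₁ - η₂ - η₃) / 2 := by
  set m := (η₁ + η₂ + η₃) / 3
  -- At `t = 0` the junk value `x / 0 = 0` turns the test operator into the projection
  -- `swapComb 1 (-1/3) (-1/3) (-1/3)`, and `t ^ 2 / t = t` still holds, so no case split is needed.
  have hT := posSemidef_swapComb (α := 1) (γ₁ := -1/3 - (η₁ - m) / t)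
    (γ₂ := -1/3 - (η₂ - m) / t) (γ₃ := -1/3 - (η₃ - m) / t) zero_le_one
    (le_of_eq (by simp only [m]; ring)) <| by
      calc _ = (η₁ ^ 2 + η₂ ^ 2 + η₃ ^ 2 - (η₁ * η₂ + η₁ * η₃ + η₂ * η₃)) / t ^ 2 := by
            simp only [m]; ring
        _ = t ^ 2 / t ^ 2 := by rw [ht]
        _ ≤ 1 ^ 2 := by rw [one_pow]; exact div_self_le_one _
  have h := hw.trace_mul_nonneg hT
  rw [trace_mul_swapComb_of_marginals htr hC hB hA, Complex.zero_le_real] at h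
  have ht' : t ^ 2 / t = t := by rw [sq, mul_self_div_self]
  calc t = t ^ 2 / t := ht'.symm
    _ ≤ (1 - η₁ - η₂ - η₃) / 2 := by
      rw [ht]
      linear_combination h

lemma exp_two_pi_I_div_three :
    Complex.exp (2 * Real.pi * Complex.I / 3) = -1 / 2 + (Real.sqrt 3 / 2 : ℝ) * Complex.I := by
  have h : 2 * Real.pi / 3 = Real.pi - Real.pi / 3 := by ring
  rw [show 2 * (Real.pi : ℂ) * Complex.I / 3 = ((2 * Real.pi / 3 : ℝ) : ℂ) * Complex.I by
    push_cast; ring, Complex.exp_mul_I, ← Complex.ofReal_cos, ← Complex.ofReal_sin, h,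
    Real.cos_pi_sub, Real.sin_pi_sub, Real.cos_pi_div_three, Real.sin_pi_div_three]
  push_cast
  ring

lemma norm_sq_add_omega_mul (a b c : ℝ) :
    ‖(a : ℂ) + Complex.exp (2 * Real.pi * Complex.I / 3) * b
        + Complex.exp (2 * Real.pi * Complex.I / 3) ^ 2 * c‖ ^ 2 =
      a ^ 2 + b ^ 2 + c ^ 2 - (a * b + a * c + b * c) := by
  have h3 : Real.sqrt 3 ^ 2 = 3 := Real.sq_sqrt (by norm_num)
  rw [Complex.sq_norm, Complex.normSq_apply, exp_two_pi_I_div_three]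
  simp only [Complex.ofReal_div, Complex.ofReal_ofNat, pow_two, Complex.add_re,
    Complex.ofReal_re, Complex.mul_re, Complex.div_ofNat_re, Complex.neg_re, Complex.one_re,
    Complex.I_re, mul_zero, Complex.div_ofNat_im, Complex.ofReal_im, zero_div, Complex.I_im,
    mul_one, sub_self, add_zero, Complex.add_im, Complex.neg_im, Complex.one_im, neg_zero,
    Complex.mul_im, zero_add, sub_zero]
  ring_nf
  have h4 : Real.sqrt 3 ^ 4 = 9 := by rw [show 4 = 2 * 2 from rfl, pow_mul, h3]; norm_num
  rw [h3, h4]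
  ring

end ThreeQubit

open ThreeQubit in
theorem stmt14 (ηAB ηAC ηBC : ℝ) :
    (∃ w : Matrix Tri Tri ℂ,
        w.PosSemidef ∧ w.trace = 1 ∧
        (∀ U ∈ Matrix.unitaryGroup (Fin 2) ℂ, triple U * w = w * triple U) ∧
        trC w = werner2 ηAB ∧ trB w = werner2 ηAC ∧ trA w = werner2 ηBC) ↔
      (‖(ηAB : ℂ) + Complex.exp (2 * Real.pi * Complex.I / 3) * ηAC
          + Complex.exp (2 * Real.pi * Complex.I / 3) ^ 2 * ηBC‖
          ≤ (1 / 2) * (1 - ηAB - ηAC - ηBC) ∧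
        -1 ≤ ηAB + ηAC + ηBC) := by
  have hnorm := norm_sq_add_omega_mul ηAB ηAC ηBC
  constructor
  · rintro ⟨w, hw, htr, -, hC, hB, hA⟩
    exact ⟨by linarith [le_half_one_sub_of_werner_marginals hw htr hC hB hA hnorm],
      neg_one_le_sum_of_werner_marginals hw htr hC hB hA⟩
  · rintro ⟨hz, hsum⟩
    have hsq := pow_le_pow_left₀ (norm_nonneg _) hz 2
    rw [hnorm] at hsq
    refine ⟨swapComb ((1 - (ηAB + ηAC + ηBC)) / 8) (ηAB / 4) (ηAC / 4) (ηBC / 4),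
      posSemidef_swapComb (by linarith [(norm_nonneg _).trans hz]) (by linarith) (by linarith),
      ?_, fun U _ => (commute_triple_swapComb U ..).eq, ?_, ?_, ?_⟩
    · rw [trace_swapComb, ← Complex.ofReal_one]; congr 1; ring
    · rw [trC_swapComb, werner2]; module
    · rw [trB_swapComb, werner2]; module
    · rw [trA_swapComb, werner2]; module
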